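/- arXiv:2209.07451 — 2 statements merged into one kernel-verified Lean document; each statement's English description precedes it below -/
import Mathlib

section
/- Let λ = inf { M(x) : x ∈ [1/3, 3] }, where M(x) = lim_{k→∞} M_{k,k}(x) is the Mina margin map. Then λ ≤ 0.999904; in particular M(0.58) ≤ 0.999904. -/
/-- `ω(x) = √(8x+1)`. -/
noncomputable def wF (x : ℝ) : ℝ := Real.sqrt (8 * x + 1)

/-- `c(x) = (ω+3)²/16`. -/
noncomputable def cF (x : ℝ) : ℝ := (wF x + 3) ^ 2 / 16

/-- `d(x) = (ω+3)²/(8(ω+1))`. -/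
noncomputable def dF (x : ℝ) : ℝ := (wF x + 3) ^ 2 / (8 * (wF x + 1))

/-- `s(x) = (ω−1)²/(4(ω+7))`. -/
noncomputable def sF (x : ℝ) : ℝ := (wF x - 1) ^ 2 / (4 * (wF x + 7))

/-- `s₋₁(x) = 1/s(1/x)`, the inverse of `s`. -/
noncomputable def sFinv (x : ℝ) : ℝ := 1 / sF (1 / x)

/-- The ℤ-indexed iterates of `s`. -/
noncomputable def sIter (k : ℤ) (x : ℝ) : ℝ :=
  if 0 ≤ k then sF^[k.toNat] x else sFinv^[(-k).toNat] x

/-- `P₀ = 1` and `P_{k+1} − P_k = ∏_{i=0}^{k} (c_i(x) − 1)`. -/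
noncomputable def Pfun (x : ℝ) : ℕ → ℝ
  | 0 => 1
  | k + 1 => Pfun x k + ∏ i ∈ Finset.range (k + 1), (cF (sIter i x) - 1)

/-- `S₀ = 1` and `S_{k+1} − S_k = ∏_{i=0}^{k} (d_i(x) − 1)`. -/
noncomputable def Sfun (x : ℝ) : ℕ → ℝ
  | 0 => 1
  | k + 1 => Sfun x k + ∏ i ∈ Finset.range (k + 1), (dF (sIter i x) - 1)

/-- `Q₁ = 0` and `Q_{k+1} − Q_k = ∏_{i=1}^{k} (c_{−i}(x) − 1)⁻¹` for `k ≥ 1`. -/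
noncomputable def Qfun (x : ℝ) : ℕ → ℝ
  | 0 => 0
  | 1 => 0
  | k + 2 => Qfun x (k + 1) + ∏ i ∈ Finset.range (k + 1), (cF (sIter (-((i : ℤ) + 1)) x) - 1)⁻¹

/-- `T₁ = 0` and `T_{k+1} − T_k = ∏_{i=1}^{k} (d_{−i}(x) − 1)⁻¹` for `k ≥ 1`. -/
noncomputable def Tfun (x : ℝ) : ℕ → ℝ
  | 0 => 0
  | 1 => 0
  | k + 2 => Tfun x (k + 1) + ∏ i ∈ Finset.range (k + 1), (dF (sIter (-((i : ℤ) + 1)) x) - 1)⁻¹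

/-- The finite-trail Mina margin map `M_{ℓ,k}(x) = x(S_k + T_ℓ)/(P_k + Q_ℓ)`. -/
noncomputable def Mfin (l k : ℕ) (x : ℝ) : ℝ :=
  x * (Sfun x k + Tfun x l) / (Pfun x k + Qfun x l)

/-!
Each of `P, S, Q + 1, T + 1` is a partial sum `∑_{j<n} ∏_{i<j} φ(sⁱ z)` of products of weights
along an orbit of `s` (for `Q` and `T` the orbit of `1/x`, since `s₋ᵢ(x) = 1/sⁱ(1/x)`), so it obeys
the Horner recursion `1 + φ(z) · (the series at s z)`. All weights are monotone functions of `ω`,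
and decimal enclosures of `ω` along the first few points of the two orbits of `0.58` bound the
first weights. As the weights are nonnegative, truncation bounds `P, Q` from below; as `s` pushes
orbits towards `0` and the weights of `S, T` decrease along them, the tails of `S, T` are dominated
by geometric series. This gives `M_{k,k}(0.58) ≤ 0.999904` for all `k ≥ 3`; since
`M(0.58) ≈ 0.9999032`, about seven correct digits are needed throughout.
-/

open Set

lemma inv_mem_Icc {x a b : ℝ} (hx : x ∈ Icc a b) (ha : 0 < a) : x⁻¹ ∈ Icc b⁻¹ a⁻¹ :=
  ⟨inv_anti₀ (ha.trans_le hx.1) hx.2, inv_anti₀ ha hx.1⟩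

lemma one_div_mem_Icc {x a b : ℝ} (hx : x ∈ Icc a b) (ha : 0 < a) : 1 / x ∈ Icc (1 / b) (1 / a) :=
  ⟨one_div_le_one_div_of_le (ha.trans_le hx.1) hx.2, one_div_le_one_div_of_le ha hx.1⟩

section OrbitSeries

variable {α : Type*} {φ : α → ℝ} {f : α → α}

noncomputable def orbitSeries (φ : α → ℝ) (f : α → α) (x : α) (n : ℕ) : ℝ :=
  ∑ j ∈ Finset.range n, ∏ i ∈ Finset.range j, φ (f^[i] x)

@[simp]
lemma orbitSeries_zero (x : α) : orbitSeries φ f x 0 = 0 := by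
  simp [orbitSeries]

lemma orbitSeries_succ (x : α) (n : ℕ) :
    orbitSeries φ f x (n + 1) = 1 + φ x * orbitSeries φ f (f x) n := by
  simp only [orbitSeries, Finset.sum_range_succ', Finset.prod_range_succ', Finset.mul_sum,
    Function.iterate_succ_apply, Finset.range_zero, Finset.prod_empty, Function.iterate_zero, id]
  rw [add_comm]
  congr 1
  refine Finset.sum_congr rfl fun j _ => ?_
  ring

lemma eq_orbitSeries_of_succ {x : α} {u : ℕ → ℝ} (h0 : u 0 = 1)
    (hu : ∀ n, u (n + 1) = u n + ∏ i ∈ Finset.range (n + 1), φ (f^[i] x)) (n : ℕ) :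
    u n = orbitSeries φ f x (n + 1) := by
  induction n with
  | zero => simp [orbitSeries, h0]
  | succ n ih => rw [hu, ih, orbitSeries, orbitSeries, Finset.sum_range_succ _ (n + 1)]

variable {U : Set α}

lemma orbitSeries_monotone (hf : MapsTo f U U) (hφ : ∀ y ∈ U, 0 ≤ φ y) {x : α} (hx : x ∈ U) :
    Monotone (orbitSeries φ f x) :=
  monotone_nat_of_le_succ fun n => by
    simp only [orbitSeries, Finset.sum_range_succ]
    exact le_add_of_nonneg_right (Finset.prod_nonneg fun i _ => hφ _ (hf.iterate i hx))

lemma orbitSeries_nonneg (hf : MapsTo f U U) (hφ : ∀ y ∈ U, 0 ≤ φ y) {x : α} (hx : x ∈ U)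
    (n : ℕ) : 0 ≤ orbitSeries φ f x n := by
  simpa using orbitSeries_monotone hf hφ hx (Nat.zero_le n)

lemma orbitSeries_succ_le (hf : MapsTo f U U) (hφ : ∀ y ∈ U, 0 ≤ φ y) {x : α} (hx : x ∈ U)
    {n : ℕ} {u B : ℝ} (hu : φ x ≤ u) (hB : orbitSeries φ f (f x) n ≤ B) :
    orbitSeries φ f x (n + 1) ≤ 1 + u * B := by
  rw [orbitSeries_succ]
  have hB₀ := orbitSeries_nonneg hf hφ (hf hx) n
  have hφx := hφ x hx
  gcongr
  linarith

lemma orbitSeries_le_inv_one_sub {r : ℝ} (hf : MapsTo f U U) (hφ : ∀ y ∈ U, φ y ∈ Icc 0 r)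
    (hr : r < 1) {x : α} (hx : x ∈ U) (n : ℕ) : orbitSeries φ f x n ≤ (1 - r)⁻¹ := by
  induction n generalizing x with
  | zero => simp [hr.le]
  | succ n ih =>
    have hfx := ih (hf hx)
    obtain ⟨h0, h1⟩ := hφ x hx
    have hr' : 0 < 1 - r := by linarith
    calc orbitSeries φ f x (n + 1) = 1 + φ x * orbitSeries φ f (f x) n := orbitSeries_succ x n
      _ ≤ 1 + φ x * (1 - r)⁻¹ := by gcongr
      _ ≤ 1 + r * (1 - r)⁻¹ := by gcongr
      _ = (1 - r)⁻¹ := by field_simp; ring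

end OrbitSeries

lemma wF_nonneg (x : ℝ) : 0 ≤ wF x := Real.sqrt_nonneg _

lemma monotone_wF : Monotone wF := fun _ _ h => Real.sqrt_le_sqrt (by linarith)

lemma one_le_wF {x : ℝ} (hx : 0 ≤ x) : 1 ≤ wF x :=
  calc 1 = wF 0 := by simp [wF]
    _ ≤ wF x := monotone_wF hx

lemma wF_mem_Icc {x a b p q : ℝ} (hx : x ∈ Icc a b) (hp : p ^ 2 ≤ 8 * a + 1)
    (hq : 8 * b + 1 ≤ q ^ 2) (hq0 : 0 ≤ q) : wF x ∈ Icc p q := by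
  constructor
  · calc p ≤ |p| := le_abs_self p
      _ ≤ wF a := Real.abs_le_sqrt hp
      _ ≤ wF x := monotone_wF hx.1
  · exact (monotone_wF hx.2).trans (Real.sqrt_le_iff.2 ⟨hq0, hq⟩)

lemma sub_one_sq_div_le {a b κ β : ℝ} (ha : 1 ≤ a) (hab : a ≤ b) (hκ : 0 < κ) (hβ : -1 < β) :
    (a - 1) ^ 2 / (κ * (a + β)) ≤ (b - 1) ^ 2 / (κ * (b + β)) := by
  rw [div_le_div_iff₀ (mul_pos hκ (by linarith)) (mul_pos hκ (by linarith))]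
  -- `(b-1)²(a+β) - (a-1)²(b+β) = (a-1)(b-1)(b-a) + (1+β)(b-a)(a+b-2)`
  have h₁ : 0 ≤ (a - 1) * (b - 1) * (b - a) := by
    apply mul_nonneg (mul_nonneg _ _) _ <;> linarith
  have h₂ : 0 ≤ (1 + β) * (b - a) * (a + b - 2) := by
    apply mul_nonneg (mul_nonneg _ _) _ <;> linarith
  nlinarith [mul_nonneg hκ.le h₁, mul_nonneg hκ.le h₂]

lemma sF_mem_Icc {x p q : ℝ} (hw : wF x ∈ Icc p q) (hp : 1 ≤ p) :
    sF x ∈ Icc ((p - 1) ^ 2 / (4 * (p + 7))) ((q - 1) ^ 2 / (4 * (q + 7))) :=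
  ⟨sub_one_sq_div_le hp hw.1 (by norm_num) (by norm_num),
    sub_one_sq_div_le (hp.trans hw.1) hw.2 (by norm_num) (by norm_num)⟩

lemma dF_sub_one_eq (x : ℝ) : dF x - 1 = (wF x - 1) ^ 2 / (8 * (wF x + 1)) := by
  have : wF x + 1 ≠ 0 := by linarith [wF_nonneg x]
  rw [dF]
  field_simp
  ring

lemma dF_sub_one_mem_Icc {x p q : ℝ} (hw : wF x ∈ Icc p q) (hp : 1 ≤ p) :
    dF x - 1 ∈ Icc ((p - 1) ^ 2 / (8 * (p + 1))) ((q - 1) ^ 2 / (8 * (q + 1))) := by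
  rw [dF_sub_one_eq]
  exact ⟨sub_one_sq_div_le hp hw.1 (by norm_num) (by norm_num),
    sub_one_sq_div_le (hp.trans hw.1) hw.2 (by norm_num) (by norm_num)⟩

lemma cF_sub_one_mem_Icc {x p q : ℝ} (hw : wF x ∈ Icc p q) (hp : -3 ≤ p) :
    cF x - 1 ∈ Icc ((p + 3) ^ 2 / 16 - 1) ((q + 3) ^ 2 / 16 - 1) := by
  constructor <;> unfold cF <;> gcongr <;> linarith [hw.1, hw.2]

lemma sF_nonneg (x : ℝ) : 0 ≤ sF x := by
  unfold sF
  have := wF_nonneg x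
  positivity

lemma sF_pos {x : ℝ} (hx : 0 < x) : 0 < sF x := by
  have hw : 1 < wF x := by rw [wF, Real.lt_sqrt zero_le_one]; linarith
  unfold sF
  exact div_pos (pow_pos (by linarith) 2) (by linarith)

lemma sF_le_self {x : ℝ} (hx : 0 ≤ x) : sF x ≤ x := by
  have hw := one_le_wF hx
  have hsq : wF x ^ 2 = 8 * x + 1 := Real.sq_sqrt (by linarith)
  rw [sF, div_le_iff₀ (by linarith)]
  nlinarith

lemma sF_le_sF {x y : ℝ} (hx : 0 ≤ x) (hxy : x ≤ y) : sF x ≤ sF y :=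
  (sF_mem_Icc ⟨one_le_wF hx, monotone_wF hxy⟩ le_rfl).2

lemma dF_sub_one_le {x y : ℝ} (hx : 0 ≤ x) (hxy : x ≤ y) : dF x - 1 ≤ dF y - 1 := by
  rw [dF_sub_one_eq y]
  exact (dF_sub_one_mem_Icc ⟨one_le_wF hx, monotone_wF hxy⟩ le_rfl).2

lemma dF_one_div_sF_sub_one_le {z t : ℝ} (hz : z ∈ Ioc 0 t) :
    dF (1 / sF t) - 1 ≤ dF (1 / sF z) - 1 :=
  dF_sub_one_le (one_div_nonneg.2 (sF_nonneg t))
    (one_div_le_one_div_of_le (sF_pos hz.1) (sF_le_sF hz.1.le hz.2))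

lemma dF_sub_one_nonneg (x : ℝ) : 0 ≤ dF x - 1 := by
  rw [dF_sub_one_eq]
  have := wF_nonneg x
  positivity

lemma cF_sub_one_nonneg {x : ℝ} (hx : 0 ≤ x) : 0 ≤ cF x - 1 := by
  have := (cF_sub_one_mem_Icc ⟨one_le_wF hx, le_rfl⟩ (by norm_num)).1
  norm_num at this
  linarith

lemma mapsTo_sF_Ici : MapsTo sF (Ici 0) (Ici 0) := fun x _ => sF_nonneg x

lemma mapsTo_sF_Ioc (t : ℝ) : MapsTo sF (Ioc 0 t) (Ioc 0 t) :=
  fun _ hx => ⟨sF_pos hx.1, (sF_le_self hx.1.le).trans hx.2⟩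

lemma sIter_natCast (i : ℕ) (x : ℝ) : sIter i x = sF^[i] x := by
  simp [sIter]

lemma sFinv_iterate (n : ℕ) (x : ℝ) : sFinv^[n] x = 1 / sF^[n] (1 / x) := by
  induction n with
  | zero => simp
  | succ n ih =>
    rw [Function.iterate_succ_apply', ih, Function.iterate_succ_apply', sFinv, one_div_one_div]

lemma sIter_neg_succ (i : ℕ) (x : ℝ) : sIter (-((i : ℤ) + 1)) x = 1 / sF (sF^[i] (1 / x)) := by
  rw [sIter, if_neg (by omega), neg_neg, ← Function.iterate_succ_apply' sF]
  exact sFinv_iterate _ x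

lemma Pfun_eq_orbitSeries (x : ℝ) (k : ℕ) :
    Pfun x k = orbitSeries (fun y => cF y - 1) sF x (k + 1) :=
  eq_orbitSeries_of_succ rfl (fun n => by simp only [Pfun, sIter_natCast]) k

lemma Sfun_eq_orbitSeries (x : ℝ) (k : ℕ) :
    Sfun x k = orbitSeries (fun y => dF y - 1) sF x (k + 1) :=
  eq_orbitSeries_of_succ rfl (fun n => by simp only [Sfun, sIter_natCast]) k

lemma Qfun_add_one_eq_orbitSeries (x : ℝ) (k : ℕ) :
    Qfun x (k + 1) + 1 = orbitSeries (fun z => (cF (1 / sF z) - 1)⁻¹) sF (1 / x) (k + 1) :=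
  eq_orbitSeries_of_succ (u := fun k => Qfun x (k + 1) + 1) (by simp [Qfun])
    (fun n => by simp only [Qfun, sIter_neg_succ]; ring) k

lemma Tfun_add_one_eq_orbitSeries (x : ℝ) (k : ℕ) :
    Tfun x (k + 1) + 1 = orbitSeries (fun z => (dF (1 / sF z) - 1)⁻¹) sF (1 / x) (k + 1) :=
  eq_orbitSeries_of_succ (u := fun k => Tfun x (k + 1) + 1) (by simp [Tfun])
    (fun n => by simp only [Tfun, sIter_neg_succ]; ring) k

lemma Mfin_succ_eq (x : ℝ) (k : ℕ) :
    Mfin (k + 1) (k + 1) x =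
      x * (orbitSeries (fun y => dF y - 1) sF x (k + 2)
          + orbitSeries (fun z => (dF (1 / sF z) - 1)⁻¹) sF (1 / x) (k + 1) - 1)
        / (orbitSeries (fun y => cF y - 1) sF x (k + 2)
          + orbitSeries (fun z => (cF (1 / sF z) - 1)⁻¹) sF (1 / x) (k + 1) - 1) := by
  rw [Mfin, Pfun_eq_orbitSeries, Sfun_eq_orbitSeries, ← Qfun_add_one_eq_orbitSeries,
    ← Tfun_add_one_eq_orbitSeries]
  ring

lemma wF_forward_orbit_058 :
    wF 0.58 ∈ Icc 2.3748684 2.3748685 ∧ wF (sF 0.58) ∈ Icc 1.1845935 1.1845936 ∧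
      wF (sF (sF 0.58)) ∈ Icc 1.0041546 1.0041547 := by
  have h₀ : wF 0.58 ∈ Icc 2.3748684 2.3748685 :=
    wF_mem_Icc ⟨le_rfl, le_rfl⟩ (by norm_num) (by norm_num) (by norm_num)
  have h₁ : wF (sF 0.58) ∈ Icc 1.1845935 1.1845936 :=
    wF_mem_Icc (sF_mem_Icc h₀ (by norm_num)) (by norm_num) (by norm_num) (by norm_num)
  exact ⟨h₀, h₁, wF_mem_Icc (sF_mem_Icc h₁ (by norm_num)) (by norm_num) (by norm_num) (by norm_num)⟩

lemma wF_backward_orbit_058 :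
    wF (1 / sF (1 / 0.58)) ∈ Icc 6.621569 6.62157 ∧
      wF (1 / sF (sF (1 / 0.58))) ∈ Icc 28.62615 28.62617 ∧
      wF (1 / sF (sF (sF (1 / 0.58)))) ∈ Icc 418.077 418.079 ∧
      wF (1 / sF (sF (sF (sF (1 / 0.58))))) ∈ Icc 87000 88000 := by
  have v₀ : wF (1 / 0.58) ∈ Icc 3.8461803 3.8461804 :=
    wF_mem_Icc ⟨le_rfl, le_rfl⟩ (by norm_num) (by norm_num) (by norm_num)
  have v₁ : wF (sF (1 / 0.58)) ∈ Icc 1.5791612 1.5791613 :=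
    wF_mem_Icc (sF_mem_Icc v₀ (by norm_num)) (by norm_num) (by norm_num) (by norm_num)
  have v₂ : wF (sF (sF (1 / 0.58))) ∈ Icc 1.0383621 1.0383622 :=
    wF_mem_Icc (sF_mem_Icc v₁ (by norm_num)) (by norm_num) (by norm_num) (by norm_num)
  have v₃ : wF (sF (sF (sF (1 / 0.58)))) ∈ Icc 1.000183 1.0001831 :=
    wF_mem_Icc (sF_mem_Icc v₂ (by norm_num)) (by norm_num) (by norm_num) (by norm_num)
  exact ⟨wF_mem_Icc (one_div_mem_Icc (sF_mem_Icc v₀ (by norm_num)) (by norm_num))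
      (by norm_num) (by norm_num) (by norm_num),
    wF_mem_Icc (one_div_mem_Icc (sF_mem_Icc v₁ (by norm_num)) (by norm_num))
      (by norm_num) (by norm_num) (by norm_num),
    wF_mem_Icc (one_div_mem_Icc (sF_mem_Icc v₂ (by norm_num)) (by norm_num))
      (by norm_num) (by norm_num) (by norm_num),
    wF_mem_Icc (one_div_mem_Icc (sF_mem_Icc v₃ (by norm_num)) (by norm_num))
      (by norm_num) (by norm_num) (by norm_num)⟩

lemma le_orbitSeries_cF_058 {n : ℕ} (hn : 4 ≤ n) :
    1.8818013 ≤ orbitSeries (fun y => cF y - 1) sF 0.58 n := by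
  obtain ⟨h₀, h₁, h₂⟩ := wF_forward_orbit_058
  have c₀ : 0.80557564 ≤ cF 0.58 - 1 :=
    (cF_sub_one_mem_Icc h₀ (by norm_num)).1.trans' (by norm_num)
  have c₁ : 0.0944264 ≤ cF (sF 0.58) - 1 :=
    (cF_sub_one_mem_Icc h₁ (by norm_num)).1.trans' (by norm_num)
  have c₂ : 0.002078 ≤ cF (sF (sF 0.58)) - 1 :=
    (cF_sub_one_mem_Icc h₂ (by norm_num)).1.trans' (by norm_num)
  refine le_trans ?_ (orbitSeries_monotone mapsTo_sF_Ici (fun y hy => cF_sub_one_nonneg hy)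
    (by norm_num : (0.58 : ℝ) ∈ Ici 0) hn)
  simp only [orbitSeries_succ, orbitSeries_zero, mul_zero, add_zero, mul_one]
  calc (1.8818013 : ℝ) ≤ 1 + 0.80557564 * (1 + 0.0944264 * (1 + 0.002078)) := by norm_num
    _ ≤ _ := by gcongr

lemma orbitSeries_dF_058_le (n : ℕ) : orbitSeries (fun y => dF y - 1) sF 0.58 n ≤ 1.0701493 := by
  obtain ⟨h₀, h₁, -⟩ := wF_forward_orbit_058
  have d₀ : dF 0.58 - 1 ≤ 0.07001249 :=
    (dF_sub_one_mem_Icc h₀ (by norm_num)).2.trans (by norm_num)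
  have d₁ : dF (sF 0.58) - 1 ≤ 0.00195 :=
    (dF_sub_one_mem_Icc h₁ (by norm_num)).2.trans (by norm_num)
  have tail := orbitSeries_le_inv_one_sub (mapsTo_sF_Ioc (sF 0.58))
    (fun y hy => ⟨dF_sub_one_nonneg y, (dF_sub_one_le hy.1.le hy.2).trans d₁⟩) (by norm_num)
    (⟨sF_pos (by norm_num), le_rfl⟩ : sF 0.58 ∈ Ioc 0 (sF 0.58))
  cases n with
  | zero => norm_num
  | succ n =>
    exact (orbitSeries_succ_le mapsTo_sF_Ici (fun y _ => dF_sub_one_nonneg y)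
      (by norm_num : (0.58 : ℝ) ∈ Ici 0) d₀ (tail n)).trans (by norm_num)

lemma le_orbitSeries_cF_backward_058 {n : ℕ} (hn : 3 ≤ n) :
    1.2123433 ≤ orbitSeries (fun z => (cF (1 / sF z) - 1)⁻¹) sF (1 / 0.58) n := by
  obtain ⟨W₁, W₂, -, -⟩ := wF_backward_orbit_058
  have q₁ : 0.20894654 ≤ (cF (1 / sF (1 / 0.58)) - 1)⁻¹ :=
    (inv_mem_Icc (cF_sub_one_mem_Icc W₁ (by norm_num)) (by norm_num)).1.trans' (by norm_num)
  have q₂ : 0.0162566 ≤ (cF (1 / sF (sF (1 / 0.58))) - 1)⁻¹ :=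
    (inv_mem_Icc (cF_sub_one_mem_Icc W₂ (by norm_num)) (by norm_num)).1.trans' (by norm_num)
  refine le_trans ?_ (orbitSeries_monotone mapsTo_sF_Ici
    (fun z _ => inv_nonneg.2 (cF_sub_one_nonneg (one_div_nonneg.2 (sF_nonneg z))))
    (by norm_num : (1 / 0.58 : ℝ) ∈ Ici 0) hn)
  simp only [orbitSeries_succ, orbitSeries_zero, mul_zero, add_zero, mul_one]
  calc (1.2123433 : ℝ) ≤ 1 + 0.20894654 * (1 + 0.0162566) := by norm_num
    _ ≤ _ := by gcongr

lemma orbitSeries_dF_backward_058_le {n : ℕ} (hn : 3 ≤ n) :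
    orbitSeries (fun z => (dF (1 / sF z) - 1)⁻¹) sF (1 / 0.58) n ≤ 3.540097 := by
  obtain ⟨W₁, W₂, W₃, W₄⟩ := wF_backward_orbit_058
  have t₁ : (dF (1 / sF (1 / 0.58)) - 1)⁻¹ ≤ 1.9293868 :=
    (inv_mem_Icc (dF_sub_one_mem_Icc W₁ (by norm_num)) (by norm_num)).2.trans (by norm_num)
  have t₂ : (dF (1 / sF (sF (1 / 0.58))) - 1)⁻¹ ≤ 0.31054496 :=
    (inv_mem_Icc (dF_sub_one_mem_Icc W₂ (by norm_num)) (by norm_num)).2.trans (by norm_num)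
  have t₃ : (dF (1 / sF (sF (sF (1 / 0.58)))) - 1)⁻¹ ≤ 0.0192731 :=
    (inv_mem_Icc (dF_sub_one_mem_Icc W₃ (by norm_num)) (by norm_num)).2.trans (by norm_num)
  have d₄ := dF_sub_one_mem_Icc W₄ (by norm_num)
  have t₄ : (dF (1 / sF (sF (sF (sF (1 / 0.58))))) - 1)⁻¹ ≤ 0.0001 :=
    (inv_mem_Icc d₄ (by norm_num)).2.trans (by norm_num)
  have tail := orbitSeries_le_inv_one_sub (mapsTo_sF_Ioc (sF (sF (sF (1 / 0.58)))))
    (fun z hz => ⟨inv_nonneg.2 (dF_sub_one_nonneg _),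
      (inv_anti₀ (d₄.1.trans_lt' (by norm_num)) (dF_one_div_sF_sub_one_le hz)).trans t₄⟩)
    (by norm_num) ⟨sF_pos (sF_pos (sF_pos (by norm_num))), le_rfl⟩
  have hφ : ∀ z ∈ Ici (0 : ℝ), 0 ≤ (dF (1 / sF z) - 1)⁻¹ :=
    fun z _ => inv_nonneg.2 (dF_sub_one_nonneg _)
  obtain ⟨m, rfl⟩ := Nat.exists_eq_add_of_le' hn
  exact (orbitSeries_succ_le mapsTo_sF_Ici hφ (by norm_num) t₁ <|
    orbitSeries_succ_le mapsTo_sF_Ici hφ (sF_nonneg _) t₂ <|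
    orbitSeries_succ_le mapsTo_sF_Ici hφ (sF_nonneg _) t₃ (tail m)).trans (by norm_num)

lemma Mfin_058_le {k : ℕ} (hk : 3 ≤ k) : Mfin k k 0.58 ≤ 0.999904 := by
  obtain ⟨n, rfl⟩ : ∃ n, k = n + 1 := ⟨k - 1, by omega⟩
  have hP := le_orbitSeries_cF_058 (n := n + 2) (by omega)
  have hS := orbitSeries_dF_058_le (n + 2)
  have hQ := le_orbitSeries_cF_backward_058 (n := n + 1) (by omega)
  have hT := orbitSeries_dF_backward_058_le (n := n + 1) (by omega)
  rw [Mfin_succ_eq, div_le_iff₀ (by linarith)]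
  linarith

/-- If `M : ℝ → ℝ` is the Mina margin map (i.e. `M(x) = lim_k M_{k,k}(x)` for `x > 0`),
then `λ = inf { M(x) : x ∈ [1/3,3] } ≤ 0.999904`; in particular `M(0.58) ≤ 0.999904`. -/
theorem lambda_upper_bound (M : ℝ → ℝ)
    (hM : ∀ x : ℝ, 0 < x →
      Filter.Tendsto (fun k : ℕ => Mfin k k x) Filter.atTop (nhds (M x))) :
    sInf (M '' Set.Icc (1 / 3 : ℝ) 3) ≤ 0.999904 ∧ M 0.58 ≤ 0.999904 := by
  have h058 : M 0.58 ≤ 0.999904 :=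
    le_of_tendsto (hM 0.58 (by norm_num)) (Filter.eventually_atTop.2 ⟨3, fun k => Mfin_058_le⟩)
  refine ⟨?_, h058⟩
  by_cases hbdd : BddBelow (M '' Icc (1 / 3 : ℝ) 3)
  · exact (csInf_le hbdd (mem_image_of_mem M ⟨by norm_num, by norm_num⟩)).trans h058
  · rw [Real.sInf_of_not_bddBelow hbdd]
    norm_num
end

section
/- There exist a constant C > 0 and a function c : [1/3, 3] → (0,∞) with inf { c(x) : x ∈ [1/3,3] } > 0 such that, writing s_{−i}(x) = 2^{2^i·c_i(x) − 1} (that is, c_i(x) = 2^{−i}·(1 + log₂ s_{−i}(x))), one has |c_i(x) − c(x)| ≤ C·2^{−i} for every x ∈ [1/3, 3] and every i ∈ ℕ. -/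
lemma sFinv_bounds {y : ℝ} (hy : 1/3 ≤ y) :
    3 ≤ sFinv y ∧ 2*y^2 ≤ sFinv y ∧ sFinv y ≤ 27*y^2 := by
  have hy0 : (0:ℝ) < y := lt_of_lt_of_le (by norm_num) hy
  set w := wF (1/y) with hwdef
  have hwnn : 0 ≤ w := Real.sqrt_nonneg _
  have hw2 : w^2 = 8*(1/y)+1 := by
    rw [hwdef, wF, Real.sq_sqrt]
    positivity
  have hinv : 0 < 8*(1/y) := by positivity
  have hinv' : 8*(1/y) ≤ 24 := by
    rw [mul_one_div, div_le_iff₀ hy0]; linarith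
  have hw1 : 1 < w := by nlinarith
  have hw5 : w ≤ 5 := by nlinarith
  have hyw : y * w^2 = 8 + y := by
    field_simp at hw2; linarith
  have hkey : y*(w-1)*(w+1) = 8 := by linear_combination hyw
  have ht0 : 0 ≤ y*(w-1) := by nlinarith
  have hub : y*(w-1) ≤ 4 := by nlinarith [mul_nonneg ht0 (by linarith : (0:ℝ) ≤ w - 1)]
  have hlb : 4/3 ≤ y*(w-1) := by nlinarith [mul_nonneg ht0 (by linarith : (0:ℝ) ≤ 5 - w)]
  have hden : (0:ℝ) < (w-1)^2 := pow_pos (by linarith) 2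
  have hform : sFinv y = 4*(w+7)/((w-1)^2) := by
    rw [sFinv, sF, one_div_div]
  rw [hform]
  refine ⟨?_, ?_, ?_⟩
  · rw [le_div_iff₀ hden]
    nlinarith [mul_nonneg (by linarith : (0:ℝ) ≤ 5 - w) (by linarith : (0:ℝ) ≤ 3*w+5)]
  · rw [le_div_iff₀ hden]
    nlinarith [sq_nonneg (y*(w-1)), mul_self_nonneg (y*(w-1))]
  · rw [div_le_iff₀ hden]
    nlinarith [sq_nonneg (y*(w-1) - 4/3)]

lemma sIter_neg_nat (i : ℕ) (x : ℝ) : sIter (-(i:ℤ)) x = sFinv^[i] x := by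
  rcases Nat.eq_zero_or_pos i with h | h
  · subst h; simp [sIter]
  · rw [sIter, if_neg (by omega)]
    congr 1
    omega

noncomputable def aSeq (x : ℝ) (i : ℕ) : ℝ :=
  ((2:ℝ)^i)⁻¹ * (1 + Real.logb 2 (sFinv^[i] x))

lemma uIter_ge {x : ℝ} (hx : 1/3 ≤ x) : ∀ i, 1/3 ≤ sFinv^[i] x ∧ (1 ≤ i → 3 ≤ sFinv^[i] x) := by
  intro i
  induction i with
  | zero => exact ⟨by simpa using hx, by omega⟩
  | succ n ih =>
    rw [Function.iterate_succ_apply']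
    have h3 := (sFinv_bounds ih.1).1
    exact ⟨by linarith, fun _ => h3⟩

lemma aSeq_step {x : ℝ} (hx : 1/3 ≤ x) (i : ℕ) :
    aSeq x i ≤ aSeq x (i+1) ∧ aSeq x (i+1) ≤ aSeq x i + 4 * ((2:ℝ)^(i+1))⁻¹ := by
  set u := sFinv^[i] x with hu
  have hu3 : 1/3 ≤ u := (uIter_ge hx i).1
  have hu0 : 0 < u := by linarith
  obtain ⟨-, h2, h27⟩ := sFinv_bounds hu3
  have hv : sFinv^[i+1] x = sFinv u := by rw [Function.iterate_succ_apply']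
  have hv0 : 0 < sFinv u := by nlinarith
  have hp : ((2:ℝ)^(i+1))⁻¹ = ((2:ℝ)^i)⁻¹ / 2 := by
    rw [pow_succ, mul_inv]; ring
  have hppos : (0:ℝ) < ((2:ℝ)^i)⁻¹ := by positivity
  have hlog2 : Real.logb 2 (2*u^2) = 1 + 2 * Real.logb 2 u := by
    rw [Real.logb_mul two_ne_zero (pow_ne_zero _ hu0.ne'), Real.logb_self_eq_one one_lt_two,
      Real.logb_pow]
    norm_num
  have hlog27 : Real.logb 2 (27*u^2) = Real.logb 2 27 + 2 * Real.logb 2 u := by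
    rw [Real.logb_mul (by norm_num) (pow_ne_zero _ hu0.ne'), Real.logb_pow]
    norm_num
  have h27le : Real.logb 2 27 ≤ 5 := by
    have : Real.logb 2 27 ≤ Real.logb 2 32 :=
      Real.logb_le_logb_of_le one_lt_two (by norm_num) (by norm_num)
    have h32 : Real.logb 2 32 = 5 := by
      rw [show (32:ℝ) = 2^(5:ℕ) by norm_num, Real.logb_pow, Real.logb_self_eq_one one_lt_two]
      norm_num
    linarith
  have hlog_lb : 1 + 2 * Real.logb 2 u ≤ Real.logb 2 (sFinv u) := by
    rw [← hlog2]
    exact Real.logb_le_logb_of_le one_lt_two (by positivity) h2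
  have hlog_ub : Real.logb 2 (sFinv u) ≤ 5 + 2 * Real.logb 2 u := by
    have := Real.logb_le_logb_of_le one_lt_two hv0 h27
    rw [hlog27] at this
    linarith
  constructor
  · rw [aSeq, aSeq, hv, hp]
    nlinarith [hlog_lb, hppos]
  · rw [aSeq, aSeq, hv, hp]
    nlinarith [hlog_ub, hppos]

lemma aSeq_tele {x : ℝ} (hx : 1/3 ≤ x) (i : ℕ) : ∀ n : ℕ,
    aSeq x (i+n) ≤ aSeq x i + 4 * (((2:ℝ)^i)⁻¹ - ((2:ℝ)^(i+n))⁻¹) := by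
  intro n
  induction n with
  | zero => simp
  | succ m ih =>
    have hstep := (aSeq_step hx (i+m)).2
    have hp : ((2:ℝ)^(i+m+1))⁻¹ = ((2:ℝ)^(i+m))⁻¹ / 2 := by
      rw [pow_succ, mul_inv]; ring
    have : aSeq x (i+(m+1)) ≤ aSeq x (i+m) + 4 * ((2:ℝ)^(i+m+1))⁻¹ := by
      rw [show i+(m+1) = (i+m)+1 by ring] at *
      exact hstep
    calc aSeq x (i+(m+1)) ≤ aSeq x i + 4 * (((2:ℝ)^i)⁻¹ - ((2:ℝ)^(i+m))⁻¹) + 4 * ((2:ℝ)^(i+m+1))⁻¹ := by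
          linarith
      _ = aSeq x i + 4 * (((2:ℝ)^i)⁻¹ - ((2:ℝ)^(i+(m+1)))⁻¹) := by
          rw [show i+(m+1) = (i+m)+1 by ring, hp]; ring

lemma aSeq_mono {x : ℝ} (hx : 1/3 ≤ x) : Monotone (aSeq x) :=
  monotone_nat_of_le_succ fun i => (aSeq_step hx i).1

lemma aSeq_le {x : ℝ} (hx : 1/3 ≤ x) {i j : ℕ} (hij : i ≤ j) :
    aSeq x j ≤ aSeq x i + 4 * ((2:ℝ)^i)⁻¹ := by
  obtain ⟨n, rfl⟩ := Nat.exists_eq_add_of_le hij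
  have := aSeq_tele hx i n
  have : ((0:ℝ)) ≤ ((2:ℝ)^(i+n))⁻¹ := by positivity
  nlinarith [aSeq_tele hx i n]

/-- Writing `s_{−i}(x) = 2^{2^i·c_i(x) − 1}`, i.e.
`c_i(x) = 2^{−i}(1 + log₂ s_{−i}(x))`, there are `C > 0` and a function
`c : [1/3,3] → (0,∞)` with positive infimum such that
`|c_i(x) − c(x)| ≤ C·2^{−i}` for every `x ∈ [1/3,3]` and `i ∈ ℕ`. -/
theorem sIter_backward_growth_rate :
    ∃ C : ℝ, 0 < C ∧
      ∃ c : ℝ → ℝ, (∃ ε : ℝ, 0 < ε ∧ ∀ x ∈ Set.Icc (1 / 3 : ℝ) 3, ε ≤ c x) ∧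
        ∀ x ∈ Set.Icc (1 / 3 : ℝ) 3, ∀ i : ℕ,
          |((2 : ℝ) ^ i)⁻¹ * (1 + Real.logb 2 (sIter (-(i : ℤ)) x)) - c x|
            ≤ C * ((2 : ℝ) ^ i)⁻¹ := by
  refine ⟨4, by norm_num, fun x => ⨆ i, aSeq x i, ?_, ?_⟩
  · refine ⟨1, one_pos, fun x hx => ?_⟩
    have hx3 : 1/3 ≤ x := hx.1
    have hbdd : BddAbove (Set.range (aSeq x)) := by
      refine ⟨aSeq x 0 + 4, ?_⟩
      rintro _ ⟨j, rfl⟩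
      have := aSeq_le hx3 (Nat.zero_le j)
      simpa using this
    have h1 : aSeq x 1 ≤ ⨆ i, aSeq x i := le_ciSup hbdd 1
    have h3 : (3:ℝ) ≤ sFinv^[1] x := (uIter_ge hx3 1).2 le_rfl
    have hlog : (1:ℝ) ≤ Real.logb 2 (sFinv^[1] x) := by
      have := Real.logb_le_logb_of_le one_lt_two two_pos (by linarith : (2:ℝ) ≤ sFinv^[1] x)
      rwa [Real.logb_self_eq_one one_lt_two] at this
    have : (1:ℝ) ≤ aSeq x 1 := by
      simp only [Function.iterate_one] at hlog
      rw [aSeq]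
      norm_num
      linarith
    linarith
  · intro x hx i
    have hx3 : 1/3 ≤ x := hx.1
    have hbdd : BddAbove (Set.range (aSeq x)) := by
      refine ⟨aSeq x 0 + 4, ?_⟩
      rintro _ ⟨j, rfl⟩
      have := aSeq_le hx3 (Nat.zero_le j)
      simpa using this
    have hge : aSeq x i ≤ ⨆ j, aSeq x j := le_ciSup hbdd i
    have hle : (⨆ j, aSeq x j) ≤ aSeq x i + 4 * ((2:ℝ)^i)⁻¹ := by
      refine ciSup_le fun j => ?_
      rcases le_or_gt i j with h | h
      · exact aSeq_le hx3 h
      · have := aSeq_mono hx3 h.le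
        have hpos : (0:ℝ) ≤ ((2:ℝ)^i)⁻¹ := by positivity
        linarith
    rw [sIter_neg_nat]
    rw [show ((2:ℝ)^i)⁻¹ * (1 + Real.logb 2 (sFinv^[i] x)) = aSeq x i from rfl]
    rw [abs_le]
    constructor <;> linarith
end
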